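/- arXiv:2605.03184 — 6 statements merged into one kernel-verified Lean document; each statement's English description precedes it below -/
import Mathlib

section
/- Let p and q be probability distributions on a finite alphabet A with full support, and let α ∈ (0,1) ∪ (1,∞). Then (1−α)·D_α(p‖q) = min over probability distributions r on A of { α·D_KL(r‖p) + (1−α)·D_KL(r‖q) }, where D_α(p‖q) = (1/(α−1))·log Σ_x p(x)^α q(x)^{1−α} is the Rényi divergence and D_KL is the Kullback–Leibler divergence. -/
open Finset

/-- Kullback–Leibler divergence on a finite alphabet, with `0 log 0 = 0`. -/
noncomputable def klDiv {A : Type*} [Fintype A] (r p : A → ℝ) : ℝ :=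
  ∑ x, r x * Real.log (r x / p x)

private lemma comb_log (α p q r : ℝ) (hp : 0 < p) (hq : 0 < q) (hr : 0 ≤ r) :
    α * (r * Real.log (r / p)) + (1 - α) * (r * Real.log (r / q))
      = r * Real.log (r / (p ^ α * q ^ (1 - α))) := by
  rcases hr.eq_or_lt with h | h
  · simp [← h]
  · have hpa : (0:ℝ) < p ^ α := Real.rpow_pos_of_pos hp α
    have hqa : (0:ℝ) < q ^ (1 - α) := Real.rpow_pos_of_pos hq (1 - α)
    rw [Real.log_div h.ne' hp.ne', Real.log_div h.ne' hq.ne',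
      Real.log_div h.ne' (by positivity), Real.log_mul hpa.ne' hqa.ne',
      Real.log_rpow hp, Real.log_rpow hq]
    ring

private lemma gibbs {A : Type*} [Fintype A] [Nonempty A] (r g : A → ℝ) (hr : ∀ x, 0 ≤ r x)
    (hg : ∀ x, 0 < g x) (hr1 : ∑ x, r x = 1) :
    -Real.log (∑ x, g x) ≤ ∑ x, r x * Real.log (r x / g x) := by
  set Z : ℝ := ∑ x, g x with hZdef
  have hZ : 0 < Z := Finset.sum_pos (fun x _ => hg x) univ_nonempty
  have key : ∀ x, r x - g x / Z - r x * Real.log Z ≤ r x * Real.log (r x / g x) := by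
    intro x
    have hgx := hg x
    rcases (hr x).eq_or_lt with h | h
    · rw [← h]
      simp only [zero_mul, zero_sub, sub_zero, neg_nonpos]
      positivity
    · have h1 : Real.log ((g x / Z) / r x) ≤ (g x / Z) / r x - 1 :=
        Real.log_le_sub_one_of_pos (by positivity)
      have h2 : r x * Real.log ((g x / Z) / r x) ≤ g x / Z - r x := by
        have := mul_le_mul_of_nonneg_left h1 (hr x)
        calc r x * Real.log ((g x / Z) / r x) ≤ r x * ((g x / Z) / r x - 1) := this
          _ = g x / Z - r x := by field_simp
      have h3 : Real.log ((g x / Z) / r x) = -(Real.log (r x / g x) + Real.log Z) := by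
        rw [Real.log_div (by positivity) h.ne', Real.log_div h.ne' (hg x).ne',
          Real.log_div (hg x).ne' hZ.ne']
        ring
      rw [h3] at h2
      nlinarith
  calc -Real.log Z = ∑ x, (r x - g x / Z - r x * Real.log Z) := by
        rw [Finset.sum_sub_distrib, Finset.sum_sub_distrib, ← Finset.sum_div,
          ← Finset.sum_mul, hr1, ← hZdef, div_self hZ.ne']
        ring
    _ ≤ _ := Finset.sum_le_sum (fun x _ => key x)

theorem stmt_3 {A : Type*} [Fintype A] (p q : A → ℝ) (α : ℝ)
    (hp : ∀ x, 0 < p x) (hq : ∀ x, 0 < q x)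
    (hp1 : ∑ x, p x = 1) (hq1 : ∑ x, q x = 1)
    (hα : α ∈ Set.Ioo (0:ℝ) 1 ∪ Set.Ioi 1) :
    IsLeast {v : ℝ | ∃ r : A → ℝ, (∀ x, 0 ≤ r x) ∧ (∑ x, r x = 1) ∧
        v = α * klDiv r p + (1 - α) * klDiv r q}
      ((1 - α) * ((1 / (α - 1)) * Real.log (∑ x, p x ^ α * q x ^ (1 - α)))) := by
  have hA : Nonempty A := by
    by_contra h
    rw [not_nonempty_iff] at h
    simp [Finset.sum_of_isEmpty] at hp1
  have hα1 : α ≠ 1 := by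
    rcases hα with h | h
    · exact ne_of_lt h.2
    · exact ne_of_gt h
  set g : A → ℝ := fun x => p x ^ α * q x ^ (1 - α) with hgdef
  have hg : ∀ x, 0 < g x := fun x => by
    have := Real.rpow_pos_of_pos (hp x) α
    have := Real.rpow_pos_of_pos (hq x) (1 - α)
    positivity
  set Z : ℝ := ∑ x, g x with hZdef
  have hZ : 0 < Z := Finset.sum_pos (fun x _ => hg x) univ_nonempty
  have htval : (1 - α) * ((1 / (α - 1)) * Real.log Z) = -Real.log Z := by
    have : α - 1 ≠ 0 := sub_ne_zero.mpr hα1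
    field_simp
    ring
  have hcomb : ∀ r : A → ℝ, (∀ x, 0 ≤ r x) →
      α * klDiv r p + (1 - α) * klDiv r q = ∑ x, r x * Real.log (r x / g x) := by
    intro r hr
    simp only [klDiv, Finset.mul_sum, ← Finset.sum_add_distrib]
    exact Finset.sum_congr rfl fun x _ => comb_log α (p x) (q x) (r x) (hp x) (hq x) (hr x)
  rw [show ((1 - α) * ((1 / (α - 1)) * Real.log (∑ x, p x ^ α * q x ^ (1 - α)))) =
      -Real.log Z from htval]
  constructor
  · refine ⟨fun x => g x / Z, fun x => by have := hg x; positivity, ?_, ?_⟩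
    · rw [← Finset.sum_div, ← hZdef, div_self hZ.ne']
    · rw [hcomb _ (fun x => by have := hg x; positivity)]
      have : ∀ x, (g x / Z) * Real.log ((g x / Z) / g x) = (g x / Z) * (-Real.log Z) := by
        intro x
        congr 1
        rw [div_right_comm, div_self (hg x).ne', one_div, Real.log_inv]
      rw [Finset.sum_congr rfl fun x _ => this x, ← Finset.sum_mul, ← Finset.sum_div,
        ← hZdef, div_self hZ.ne', one_mul]
  · rintro v ⟨r, hr, hr1, rfl⟩
    rw [hcomb r hr]
    exact gibbs r g hr hg hr1
end

section
/- Let p be a probability distribution on a finite set X□ ⊆ ℝ₊^m, let ρ ∈ (0,1) ∪ (1,∞), and let b be a portfolio vector with ⟨b,x⟩ > 0 for all x with p(x) > 0. Define the tilted law p̃(x) = p(x)^{1/ρ} / Z_p with Z_p = Σ_x p(x)^{1/ρ}, and the normalized wealth law q̄_b(x) = ⟨b,x⟩ / Z_q with Z_q = Σ_{x∈X□} ⟨b,x⟩. Then the certainty-equivalent growth rate G_ρ = (1/(1−ρ))·log Σ_x p(x)·⟨b,x⟩^{1−ρ} satisfies G_ρ = − D_ρ(p̃ ‖ q̄_b)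 − H_ρ(p̃) + log Z_q, where D_ρ is the Rényi divergence of order ρ and H_ρ is the Rényi entropy of order ρ. -/
open Finset

theorem stmt_5 {m : ℕ} (S : Finset (Fin m → ℝ)) (p : (Fin m → ℝ) → ℝ)
    (ρ : ℝ) (b : Fin m → ℝ)
    (hS : ∀ x ∈ S, ∀ i, 0 ≤ x i)
    (hρ : ρ ∈ Set.Ioo (0:ℝ) 1 ∪ Set.Ioi 1)
    (hp0 : ∀ x ∈ S, 0 ≤ p x) (hp1 : ∑ x ∈ S, p x = 1)
    (hppos : ∃ x ∈ S, 0 < p x)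
    (hb0 : ∀ i, 0 ≤ b i) (hb1 : ∑ i, b i = 1)
    (hb : ∀ x ∈ S, 0 < ∑ i, b i * x i)
    (Zp Zq : ℝ) (ptilde qbar : (Fin m → ℝ) → ℝ)
    (hZp : Zp = ∑ x ∈ S, p x ^ (1/ρ))
    (hZq : Zq = ∑ x ∈ S, ∑ i, b i * x i)
    (hpt : ptilde = fun x => p x ^ (1/ρ) / Zp)
    (hqb : qbar = fun x => (∑ i, b i * x i) / Zq) :
    (1/(1-ρ)) * Real.log (∑ x ∈ S, p x * (∑ i, b i * x i) ^ (1-ρ)) =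
      -((1/(ρ-1)) * Real.log (∑ x ∈ S, ptilde x ^ ρ * qbar x ^ (1-ρ)))
      - (1/(1-ρ)) * Real.log (∑ x ∈ S, ptilde x ^ ρ) + Real.log Zq := by
  obtain ⟨x₀, hx₀S, hx₀p⟩ := hppos
  have hρ0 : 0 < ρ := by
    rcases hρ with h | h
    · exact h.1
    · linarith [Set.mem_Ioi.mp h]
  have hρ1 : ρ ≠ 1 := by
    rcases hρ with h | h
    · exact ne_of_lt h.2
    · exact ne_of_gt h
  have h1ρ : (1:ℝ) - ρ ≠ 0 := by
    intro h; exact hρ1 (by linarith)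
  have hZppos : 0 < Zp := by
    rw [hZp]
    exact Finset.sum_pos' (fun x hx => Real.rpow_nonneg (hp0 x hx) _)
      ⟨x₀, hx₀S, Real.rpow_pos_of_pos hx₀p _⟩
  have hZqpos : 0 < Zq := by
    rw [hZq]; exact Finset.sum_pos (fun x hx => hb x hx) ⟨x₀, hx₀S⟩
  have hA : 0 < ∑ x ∈ S, p x * (∑ i, b i * x i) ^ (1-ρ) :=
    Finset.sum_pos'
      (fun x hx => mul_nonneg (hp0 x hx) (Real.rpow_nonneg (hb x hx).le _))
      ⟨x₀, hx₀S, mul_pos hx₀p (Real.rpow_pos_of_pos (hb x₀ hx₀S) _)⟩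
  have hpow : ∀ x ∈ S, (p x ^ (1/ρ)) ^ ρ = p x := by
    intro x hx
    rw [← Real.rpow_mul (hp0 x hx), one_div, inv_mul_cancel₀ hρ0.ne', Real.rpow_one]
  have key1 : ∑ x ∈ S, ptilde x ^ ρ * qbar x ^ (1-ρ)
      = (∑ x ∈ S, p x * (∑ i, b i * x i) ^ (1-ρ)) / (Zp ^ ρ * Zq ^ (1-ρ)) := by
    rw [Finset.sum_div]
    refine Finset.sum_congr rfl (fun x hx => ?_)
    rw [hpt, hqb]
    simp only
    rw [Real.div_rpow (Real.rpow_nonneg (hp0 x hx) _) hZppos.le,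
        Real.div_rpow (hb x hx).le hZqpos.le, div_mul_div_comm, hpow x hx]
  have key2 : ∑ x ∈ S, ptilde x ^ ρ = 1 / Zp ^ ρ := by
    have h : ∀ x ∈ S, ptilde x ^ ρ = p x / Zp ^ ρ := by
      intro x hx
      rw [hpt]
      simp only
      rw [Real.div_rpow (Real.rpow_nonneg (hp0 x hx) _) hZppos.le, hpow x hx]
    rw [Finset.sum_congr rfl h, ← Finset.sum_div, hp1]
  rw [key1, key2, Real.log_div hA.ne' (by positivity), Real.log_div one_ne_zero (by positivity),
      Real.log_mul (by positivity) (by positivity), Real.log_rpow hZppos, Real.log_rpow hZqpos,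
      Real.log_one]
  have h2 : ρ - 1 ≠ 0 := fun h => hρ1 (by linarith)
  field_simp
  ring
end

section
/- Let p be a probability distribution on a finite set X□ ⊆ ℝ₊^m and ρ ∈ (0,1) ∪ (1,∞). With notation as in the CE-growth decomposition (p̃ the 1/ρ-tilted law, q̄_b the normalized wealth law, Z_q the wealth partition function), for every portfolio b with ⟨b,x⟩ > 0 for all x ∈ X□: if ρ < 1 then (1/(1−ρ))·Σ_x p(x)⟨b,x⟩^{1−ρ} ≤ (1/(1−ρ))·exp((1−ρ)·(−H_ρ(p̃) + log Z_q)), and the analogous inequality (with reversed sign convention absorbed by the factor 1/(1−ρ) < 0) holds for ρ > 1. Equivalently, G_ρ ≤ −H_ρ(p̃) + log Z_q. -/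
/-!
With `u x = p x ^ (1/ρ)` and `w x = ⟨b, x⟩`, the certainty-equivalent wealth is
`∑ u ^ ρ * w ^ (1 - ρ)`, while `exp ((1 - ρ) * (-H_ρ(p̃) + log Z_q)) = Z_p ^ ρ * Z_q ^ (1 - ρ)`
with `Z_p = ∑ u` and `Z_q = ∑ w`. That the first is at most the second for `ρ < 1` (at least,
for `ρ > 1`) is the nonnegativity of `D_ρ(p̃ ‖ q̄_b)`, i.e. Hölder's inequality with exponents
`1/ρ` and `1/(1 - ρ)`; for `ρ > 1` it is reversed by applying Hölder with exponent `1/ρ < 1`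
to the weights `u ^ ρ * w ^ (1 - ρ)` and `w`, and the sign of `1/(1 - ρ)` absorbs the reversal.
-/

open Finset Real

namespace Finset

variable {ι : Type*} (s : Finset ι) {u w : ι → ℝ} {ρ : ℝ}

theorem sum_rpow_mul_rpow_one_sub_le (hρ₀ : 0 < ρ) (hρ₁ : ρ < 1)
    (hu : ∀ i ∈ s, 0 ≤ u i) (hw : ∀ i ∈ s, 0 ≤ w i) :
    ∑ i ∈ s, u i ^ ρ * w i ^ (1 - ρ) ≤ (∑ i ∈ s, u i) ^ ρ * (∑ i ∈ s, w i) ^ (1 - ρ) := by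
  have h1ρ : 1 - ρ ≠ 0 := sub_ne_zero.2 hρ₁.ne'
  have holder := inner_le_Lp_mul_Lq_of_nonneg s (HolderConjugate.inv_one_sub_inv hρ₀ hρ₁)
    (fun i hi => rpow_nonneg (hu i hi) ρ) (fun i hi => rpow_nonneg (hw i hi) (1 - ρ))
  rwa [sum_congr rfl fun i hi => rpow_rpow_inv (hu i hi) hρ₀.ne',
    sum_congr rfl fun i hi => rpow_rpow_inv (hw i hi) h1ρ, one_div, one_div, inv_inv, inv_inv]
    at holder

theorem le_sum_rpow_mul_rpow_one_sub (hρ : 1 < ρ)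
    (hu : ∀ i ∈ s, 0 ≤ u i) (hw : ∀ i ∈ s, 0 < w i) :
    (∑ i ∈ s, u i) ^ ρ * (∑ i ∈ s, w i) ^ (1 - ρ) ≤ ∑ i ∈ s, u i ^ ρ * w i ^ (1 - ρ) := by
  rcases s.eq_empty_or_nonempty with rfl | hs
  · simp [zero_rpow (by linarith : ρ ≠ 0)]
  have hρ₀ : 0 < ρ := one_pos.trans hρ
  set A := ∑ i ∈ s, u i ^ ρ * w i ^ (1 - ρ)
  set W := ∑ i ∈ s, w i
  have hW : 0 < W := sum_pos hw hs
  have hA : 0 ≤ A := sum_nonneg fun i hi => by have := hu i hi; have := hw i hi; positivity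
  have hterm : ∀ i ∈ s, (u i ^ ρ * w i ^ (1 - ρ)) ^ ρ⁻¹ * w i ^ (1 - ρ⁻¹) = u i := by
    intro i hi
    have hwi := hw i hi
    rw [mul_rpow (rpow_nonneg (hu i hi) _) (rpow_nonneg hwi.le _), rpow_rpow_inv (hu i hi)
      hρ₀.ne', ← rpow_mul hwi.le, mul_assoc, ← rpow_add hwi]
    field_simp
    simp
  have holder := sum_rpow_mul_rpow_one_sub_le s (u := fun i => u i ^ ρ * w i ^ (1 - ρ))
    (inv_pos.2 hρ₀) (inv_lt_one_of_one_lt₀ hρ)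
    (fun i hi => by have := hu i hi; have := hw i hi; positivity) (fun i hi => (hw i hi).le)
  rw [sum_congr rfl hterm] at holder
  calc (∑ i ∈ s, u i) ^ ρ * W ^ (1 - ρ)
      ≤ (A ^ ρ⁻¹ * W ^ (1 - ρ⁻¹)) ^ ρ * W ^ (1 - ρ) := by gcongr; exact sum_nonneg hu
    _ = A := by
      rw [mul_rpow (by positivity) (by positivity), rpow_inv_rpow hA hρ₀.ne', ← rpow_mul hW.le,
        mul_assoc, ← rpow_add hW]
      field_simp
      simp

theorem one_div_one_sub_mul_sum_rpow_mul_rpow_le (hρ₀ : 0 < ρ) (hρ₁ : ρ ≠ 1)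
    (hu : ∀ i ∈ s, 0 ≤ u i) (hw : ∀ i ∈ s, 0 < w i) :
    1 / (1 - ρ) * ∑ i ∈ s, u i ^ ρ * w i ^ (1 - ρ) ≤
      1 / (1 - ρ) * ((∑ i ∈ s, u i) ^ ρ * (∑ i ∈ s, w i) ^ (1 - ρ)) := by
  rcases hρ₁.lt_or_gt with hρ | hρ
  · exact mul_le_mul_of_nonneg_left
      (sum_rpow_mul_rpow_one_sub_le s hρ₀ hρ hu fun i hi => (hw i hi).le)
      (one_div_nonneg.2 (by linarith))
  · exact mul_le_mul_of_nonpos_left (le_sum_rpow_mul_rpow_one_sub s hρ hu hw)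
      (one_div_nonpos.2 (by linarith))

theorem sum_rpow_one_div_div_rpow {p : ι → ℝ} {Z : ℝ} (hp : ∀ i ∈ s, 0 ≤ p i) (hZ : 0 ≤ Z)
    (hρ : ρ ≠ 0) : ∑ i ∈ s, (p i ^ (1 / ρ) / Z) ^ ρ = (∑ i ∈ s, p i) / Z ^ ρ := by
  rw [sum_div]
  refine sum_congr rfl fun i hi => ?_
  rw [div_rpow (rpow_nonneg (hp i hi) _) hZ, one_div, rpow_inv_rpow (hp i hi) hρ]

end Finset

theorem Real.mul_log_le_mul_log_of_mul_le_mul {c a b : ℝ} (ha : 0 < a) (hb : 0 < b)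
    (h : c * a ≤ c * b) : c * log a ≤ c * log b := by
  rcases lt_trichotomy c 0 with hc | rfl | hc
  · exact mul_le_mul_of_nonpos_left (log_le_log hb ((mul_le_mul_left_of_neg hc).1 h)) hc.le
  · simp
  · exact mul_le_mul_of_nonneg_left (log_le_log ha (le_of_mul_le_mul_left h hc)) hc.le

theorem stmt_6_general {m : ℕ} (S : Finset (Fin m → ℝ)) (p : (Fin m → ℝ) → ℝ)
    (ρ : ℝ) (b : Fin m → ℝ)
    (hρ : ρ ∈ Set.Ioo (0:ℝ) 1 ∪ Set.Ioi 1)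
    (hp0 : ∀ x ∈ S, 0 ≤ p x) (hp1 : ∑ x ∈ S, p x = 1)
    (hb : ∀ x ∈ S, 0 < ∑ i, b i * x i)
    (Zp Zq Hρ : ℝ) (ptilde : (Fin m → ℝ) → ℝ)
    (hZp : Zp = ∑ x ∈ S, p x ^ (1/ρ))
    (hZq : Zq = ∑ x ∈ S, ∑ i, b i * x i)
    (hpt : ptilde = fun x => p x ^ (1/ρ) / Zp)
    (hH : Hρ = (1/(1-ρ)) * Real.log (∑ x ∈ S, ptilde x ^ ρ)) :
    (1/(1-ρ)) * (∑ x ∈ S, p x * (∑ i, b i * x i) ^ (1-ρ)) ≤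
      (1/(1-ρ)) * Real.exp ((1-ρ) * (-Hρ + Real.log Zq)) ∧
    (1/(1-ρ)) * Real.log (∑ x ∈ S, p x * (∑ i, b i * x i) ^ (1-ρ)) ≤
      -Hρ + Real.log Zq := by
  have hρ₀ : 0 < ρ := by rcases hρ with h | h; exacts [h.1, one_pos.trans h]
  have hρ₁ : ρ ≠ 1 := by rcases hρ with h | h; exacts [h.2.ne, h.ne']
  obtain ⟨x₀, hx₀, hpx₀⟩ : ∃ x ∈ S, 0 < p x :=
    exists_lt_of_sum_lt (by simp [hp1] : ∑ x ∈ S, (0 : ℝ) < ∑ x ∈ S, p x)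
  have hZp_pos : 0 < Zp := hZp ▸ sum_pos' (fun x hx => rpow_nonneg (hp0 x hx) _)
    ⟨x₀, hx₀, rpow_pos_of_pos hpx₀ _⟩
  have hZq_pos : 0 < Zq := hZq ▸ sum_pos hb ⟨x₀, hx₀⟩
  have hA : 0 < ∑ x ∈ S, p x * (∑ i, b i * x i) ^ (1 - ρ) :=
    sum_pos' (fun x hx => mul_nonneg (hp0 x hx) (rpow_nonneg (hb x hx).le _))
      ⟨x₀, hx₀, mul_pos hpx₀ (rpow_pos_of_pos (hb x₀ hx₀) _)⟩
  have hlog : log (Zp ^ ρ * Zq ^ (1 - ρ)) = (1 - ρ) * (-Hρ + log Zq) := by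
    rw [hH, hpt, sum_rpow_one_div_div_rpow S hp0 hZp_pos.le hρ₀.ne', hp1, one_div (Zp ^ ρ),
      log_inv, log_mul (by positivity) (by positivity), log_rpow hZp_pos, log_rpow hZq_pos]
    field_simp [sub_ne_zero.2 hρ₁.symm]
  have key := one_div_one_sub_mul_sum_rpow_mul_rpow_le S (u := fun x => p x ^ (1 / ρ)) hρ₀ hρ₁
    (fun x hx => rpow_nonneg (hp0 x hx) _) hb
  rw [sum_congr rfl fun x hx => by rw [one_div, rpow_inv_rpow (hp0 x hx) hρ₀.ne'], ← hZp, ← hZq]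
    at key
  refine ⟨by rwa [← hlog, exp_log (by positivity)], ?_⟩
  calc 1 / (1 - ρ) * log (∑ x ∈ S, p x * (∑ i, b i * x i) ^ (1 - ρ))
      ≤ 1 / (1 - ρ) * log (Zp ^ ρ * Zq ^ (1 - ρ)) :=
        mul_log_le_mul_log_of_mul_le_mul hA (by positivity) key
    _ = -Hρ + log Zq := by
      rw [hlog]
      field_simp [sub_ne_zero.2 hρ₁.symm]

theorem stmt_6 {m : ℕ} (S : Finset (Fin m → ℝ)) (p : (Fin m → ℝ) → ℝ)
    (ρ : ℝ) (b : Fin m → ℝ)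
    (hS : ∀ x ∈ S, ∀ i, 0 ≤ x i)
    (hρ : ρ ∈ Set.Ioo (0:ℝ) 1 ∪ Set.Ioi 1)
    (hp0 : ∀ x ∈ S, 0 ≤ p x) (hp1 : ∑ x ∈ S, p x = 1)
    (hppos : ∃ x ∈ S, 0 < p x)
    (hb0 : ∀ i, 0 ≤ b i) (hb1 : ∑ i, b i = 1)
    (hb : ∀ x ∈ S, 0 < ∑ i, b i * x i)
    (Zp Zq Hρ : ℝ) (ptilde : (Fin m → ℝ) → ℝ)
    (hZp : Zp = ∑ x ∈ S, p x ^ (1/ρ))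
    (hZq : Zq = ∑ x ∈ S, ∑ i, b i * x i)
    (hpt : ptilde = fun x => p x ^ (1/ρ) / Zp)
    (hH : Hρ = (1/(1-ρ)) * Real.log (∑ x ∈ S, ptilde x ^ ρ)) :
    (1/(1-ρ)) * (∑ x ∈ S, p x * (∑ i, b i * x i) ^ (1-ρ)) ≤
      (1/(1-ρ)) * Real.exp ((1-ρ) * (-Hρ + Real.log Zq)) ∧
    (1/(1-ρ)) * Real.log (∑ x ∈ S, p x * (∑ i, b i * x i) ^ (1-ρ)) ≤
      -Hρ + Real.log Zq :=
  stmt_6_general S p ρ b hρ hp0 hp1 hb Zp Zq Hρ ptilde hZp hZq hpt hH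
end

section
/- Let X□ ⊆ ℝ₊^m be a finite symmetric covering set (Σ_{x∈X□} x = γ·𝟙 with γ > 0), p a probability distribution on X□, and ρ ∈ (0,1) ∪ (1,∞). Let B ⊆ Δ^{m-1} be the set of portfolios b with ⟨b,x⟩ > 0 for all x ∈ X□. Then b* ∈ B maximizes b ↦ (1/(1−ρ))·log Σ_x p(x)⟨b,x⟩^{1−ρ} over B if and only if b* minimizes b ↦ D_ρ(p̃ ‖ q̄_b) over B, where p̃ is the 1/ρ-tilted law of p and q̄_b(x) = ⟨b,x⟩/γ. -/
open Finset

theorem stmt_10 {m : ℕ} (S : Finset (Fin m → ℝ)) (p : (Fin m → ℝ) → ℝ)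
    (ρ γ : ℝ)
    (hS : ∀ x ∈ S, ∀ i, 0 ≤ x i)
    (hγ : 0 < γ) (hcov : ∀ i, ∑ x ∈ S, x i = γ)
    (hρ : ρ ∈ Set.Ioo (0:ℝ) 1 ∪ Set.Ioi 1)
    (hp0 : ∀ x ∈ S, 0 ≤ p x) (hp1 : ∑ x ∈ S, p x = 1)
    (B : Set (Fin m → ℝ))
    (hB : B = {b | (∀ i, 0 ≤ b i) ∧ (∑ i, b i = 1) ∧ ∀ x ∈ S, 0 < ∑ i, b i * x i})
    (G D : (Fin m → ℝ) → ℝ)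
    (hG : G = fun b => (1/(1-ρ)) * Real.log (∑ x ∈ S, p x * (∑ i, b i * x i) ^ (1-ρ)))
    (hD : D = fun b => (1/(ρ-1)) * Real.log (∑ x ∈ S,
        (p x ^ (1/ρ) / ∑ y ∈ S, p y ^ (1/ρ)) ^ ρ * ((∑ i, b i * x i) / γ) ^ (1-ρ)))
    (bstar : Fin m → ℝ) (hbstar : bstar ∈ B) :
    (∀ b ∈ B, G b ≤ G bstar) ↔ (∀ b ∈ B, D bstar ≤ D b) := by
  have hρ0 : ρ ≠ 0 := by
    rcases hρ with h | h
    · exact ne_of_gt h.1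
    · exact ne_of_gt (lt_trans one_pos h)
  have hρ1 : ρ ≠ 1 := by
    rcases hρ with h | h
    · exact ne_of_lt h.2
    · exact ne_of_gt h
  obtain ⟨x0, hx0S, hx0⟩ : ∃ x ∈ S, 0 < p x := by
    by_contra h
    push_neg at h
    have : (∑ x ∈ S, p x) ≤ 0 := Finset.sum_nonpos h
    linarith [hp1 ▸ this]
  set Z := ∑ y ∈ S, p y ^ (1/ρ) with hZ
  have hZpos : 0 < Z :=
    Finset.sum_pos' (fun y hy => Real.rpow_nonneg (hp0 y hy) _)
      ⟨x0, hx0S, Real.rpow_pos_of_pos hx0 _⟩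
  have hCpos : 0 < Z ^ ρ * γ ^ (1-ρ) :=
    mul_pos (Real.rpow_pos_of_pos hZpos _) (Real.rpow_pos_of_pos hγ _)
  have key : ∀ b ∈ B, D b = -G b - (1/(ρ-1)) * Real.log (Z ^ ρ * γ ^ (1-ρ)) := by
    intro b hb
    rw [hB] at hb
    obtain ⟨-, -, hbx⟩ := hb
    have hApos : 0 < ∑ x ∈ S, p x * (∑ i, b i * x i) ^ (1-ρ) :=
      Finset.sum_pos' (fun x hx => mul_nonneg (hp0 x hx)
          (Real.rpow_nonneg (hbx x hx).le _))
        ⟨x0, hx0S, mul_pos hx0 (Real.rpow_pos_of_pos (hbx x0 hx0S) _)⟩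
    have hsum : ∑ x ∈ S, (p x ^ (1/ρ) / Z) ^ ρ * ((∑ i, b i * x i) / γ) ^ (1-ρ)
        = (∑ x ∈ S, p x * (∑ i, b i * x i) ^ (1-ρ)) / (Z ^ ρ * γ ^ (1-ρ)) := by
      rw [Finset.sum_div]
      refine Finset.sum_congr rfl fun x hx => ?_
      rw [Real.div_rpow (Real.rpow_nonneg (hp0 x hx) _) hZpos.le,
          Real.div_rpow (hbx x hx).le hγ.le,
          ← Real.rpow_mul (hp0 x hx), one_div_mul_cancel hρ0, Real.rpow_one,
          div_mul_div_comm]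
    rw [hD, hG]
    simp only
    rw [hsum, Real.log_div hApos.ne' hCpos.ne']
    rw [show (1:ℝ)-ρ = -(ρ-1) by ring, div_neg]
    ring
  constructor
  · intro h b hb
    have hG' := h b hb
    rw [key b hb, key bstar hbstar]
    linarith
  · intro h b hb
    have hD' := h b hb
    rw [key b hb, key bstar hbstar] at hD'
    linarith
end

section
/- Let p be a probability vector on k states, M a k×m matrix with positive entries, and ρ ∈ (0,1). Define for r in the probability simplex Δ_{k-1} and b ∈ Δ^{m-1} the function J(r,b) = (ρ/(1−ρ))·D_KL(r‖p̃) + D_KL(r‖q̄_b), where q̄_b is the normalized wealth law induced by M and b, and p̃ is the 1/ρ-tilt of p. Suppose b^{(t)} ∈ Δ^{m-1}, r^{(t)} = argmin_r J(r, b^{(t)}), and b^{(t+1)} satisfies f_{r^{(t)}}(b^{(t+1)}) ≤ f_{r^{(t)}}(b^{(t)}), where f_r(b) = −Σ_j r_j log(Mb)_j. Then D_ρ(p̃ ‖ q̄_{b^{(t+1)}}) ≤ D_ρ(p̃ ‖ q̄_{b^{(t)}}). -/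
/-!
For `ρ < 1`, `(1 - ρ) · J(r, b)` is the relative entropy of `r` against the unnormalised weights
`p̃ ^ ρ * q̄_b ^ (1 - ρ)`, so Gibbs' inequality gives `D_ρ(p̃ ‖ q̄_b) = min_r J(r, b)`, attained at the
normalised weights. Since every column of `M` sums to `γ`, `q̄_b = M b / γ` on the simplex and
`J(r, b)` depends on `b` only through `f_r(b)`. Hence
`D_ρ(b⁺) ≤ J(r, b⁺) ≤ J(r, b) ≤ min_r' J(r', b) = D_ρ(b)`.
-/

open Finset Real
open scoped Matrix

lemma Matrix.mulVec_pos_of_mem_stdSimplex {ι κ : Type*} [Fintype κ] {M : Matrix ι κ ℝ}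
    (hM : ∀ j i, 0 < M j i) {b : κ → ℝ} (hb : b ∈ stdSimplex ℝ κ) (j : ι) : 0 < (M *ᵥ b) j := by
  obtain ⟨i, -, hi⟩ := exists_ne_zero_of_sum_ne_zero (hb.2.trans_ne one_ne_zero)
  exact sum_pos' (fun i _ => mul_nonneg (hM j i).le (hb.1 i))
    ⟨i, mem_univ i, mul_pos (hM j i) ((hb.1 i).lt_of_ne' hi)⟩

lemma Matrix.sum_mulVec_of_sum_col_eq {R ι κ : Type*} [CommSemiring R] [Fintype ι] [Fintype κ]
    {M : Matrix ι κ R} {γ : R} (hγ : ∀ i, ∑ j, M j i = γ) (b : κ → R) :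
    ∑ j, (M *ᵥ b) j = γ * ∑ i, b i := by
  simp only [Matrix.mulVec, dotProduct]
  rw [sum_comm, mul_sum]
  simp only [← sum_mul, hγ]

lemma nonempty_of_mem_stdSimplex {𝕜 ι : Type*} [Semiring 𝕜] [PartialOrder 𝕜] [Nontrivial 𝕜]
    [Fintype ι] {r : ι → 𝕜} (hr : r ∈ stdSimplex 𝕜 ι) : Nonempty ι := by
  obtain ⟨j, -⟩ := exists_ne_zero_of_sum_ne_zero (hr.2.trans_ne one_ne_zero)
  exact ⟨j⟩

noncomputable section

variable {ι : Type*} [Fintype ι]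

def relEntropy (r w : ι → ℝ) : ℝ := ∑ j, r j * log (r j / w j)

lemma div_sum_pos [Nonempty ι] {x : ι → ℝ} (hx : ∀ j, 0 < x j) (j : ι) : 0 < x j / ∑ l, x l :=
  div_pos (hx j) (sum_pos (fun l _ => hx l) univ_nonempty)

def renyiDiv (ρ : ℝ) (a q : ι → ℝ) : ℝ := 1 / (ρ - 1) * log (∑ j, a j ^ ρ * q j ^ (1 - ρ))

lemma sub_le_mul_log_div {r w : ℝ} (hr : 0 ≤ r) (hw : 0 < w) : r - w ≤ r * log (r / w) := by
  rcases hr.eq_or_lt with rfl | hr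
  · simpa using hw.le
  · have h := one_sub_inv_le_log_of_pos (div_pos hr hw)
    rw [inv_div] at h
    calc r - w = r * (1 - w / r) := by field_simp
      _ ≤ r * log (r / w) := mul_le_mul_of_nonneg_left h hr.le

lemma relEntropy_nonneg {r w : ι → ℝ} (hr : ∀ j, 0 ≤ r j) (hw : ∀ j, 0 < w j)
    (hsum : ∑ j, r j = ∑ j, w j) : 0 ≤ relEntropy r w :=
  calc (0 : ℝ) = ∑ j, (r j - w j) := by rw [sum_sub_distrib, hsum, sub_self]
    _ ≤ relEntropy r w := sum_le_sum fun j _ => sub_le_mul_log_div (hr j) (hw j)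

lemma relEntropy_eq_sub {r w : ι → ℝ} (hw : ∀ j, w j ≠ 0) :
    relEntropy r w = ∑ j, r j * log (r j) - ∑ j, r j * log (w j) := by
  rw [relEntropy, ← sum_sub_distrib]
  refine sum_congr rfl fun j _ => ?_
  rcases eq_or_ne (r j) 0 with h | h
  · simp [h]
  · rw [log_div h (hw j), mul_sub]

lemma relEntropy_div_const {r w : ι → ℝ} (hr : ∑ j, r j = 1) (hw : ∀ j, w j ≠ 0) {c : ℝ}
    (hc : c ≠ 0) : relEntropy r (fun j => w j / c) = relEntropy r w + log c := by
  rw [relEntropy_eq_sub hw, relEntropy_eq_sub fun j => div_ne_zero (hw j) hc]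
  simp_rw [log_div (hw _) hc, mul_sub, sum_sub_distrib, ← sum_mul, hr, one_mul]
  ring

lemma neg_log_sum_le_relEntropy {r w : ι → ℝ} (hr : r ∈ stdSimplex ℝ ι) (hw : ∀ j, 0 < w j) :
    -log (∑ j, w j) ≤ relEntropy r w := by
  have := nonempty_of_mem_stdSimplex hr
  have hZ : 0 < ∑ j, w j := sum_pos (fun j _ => hw j) univ_nonempty
  have h := relEntropy_nonneg hr.1 (fun j => div_pos (hw j) hZ)
    (by rw [← sum_div, div_self hZ.ne', hr.2])
  rw [relEntropy_div_const hr.2 (fun j => (hw j).ne') hZ.ne'] at h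
  linarith

lemma relEntropy_normalize_self {w : ι → ℝ} (hw : ∀ j, w j ≠ 0) (hZ : ∑ j, w j ≠ 0) :
    relEntropy (fun j => w j / ∑ l, w l) w = -log (∑ j, w j) := by
  have h : ∀ j, (w j / ∑ l, w l) / w j = (∑ l, w l)⁻¹ := fun j => by
    rw [div_right_comm, div_self (hw j), one_div]
  simp_rw [relEntropy, h, log_inv, ← sum_mul, ← sum_div, div_self hZ, one_mul]

lemma relEntropy_tilt {ρ : ℝ} (hρ : ρ ≠ 1) {r a q : ι → ℝ} (ha : ∀ j, 0 < a j)
    (hq : ∀ j, 0 < q j) :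
    ρ / (1 - ρ) * relEntropy r a + relEntropy r q
      = 1 / (1 - ρ) * relEntropy r (fun j => a j ^ ρ * q j ^ (1 - ρ)) := by
  have hw : ∀ j, a j ^ ρ * q j ^ (1 - ρ) ≠ 0 := fun j =>
    (mul_pos (rpow_pos_of_pos (ha j) _) (rpow_pos_of_pos (hq j) _)).ne'
  rw [relEntropy_eq_sub (fun j => (ha j).ne'), relEntropy_eq_sub (fun j => (hq j).ne'),
    relEntropy_eq_sub hw]
  simp_rw [log_mul (rpow_pos_of_pos (ha _) _).ne' (rpow_pos_of_pos (hq _) _).ne',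
    log_rpow (ha _), log_rpow (hq _), mul_add, sum_add_distrib, mul_left_comm _ ρ,
    mul_left_comm _ (1 - ρ), ← mul_sum]
  have : (1 : ℝ) - ρ ≠ 0 := sub_ne_zero.mpr hρ.symm
  field_simp
  ring

lemma renyiDiv_eq_neg_log (ρ : ℝ) (a q : ι → ℝ) :
    renyiDiv ρ a q = 1 / (1 - ρ) * -log (∑ j, a j ^ ρ * q j ^ (1 - ρ)) := by
  rw [mul_neg, ← neg_mul, ← div_neg, neg_sub, renyiDiv]

lemma renyiDiv_le {ρ : ℝ} (hρ : ρ < 1) {r a q : ι → ℝ} (hr : r ∈ stdSimplex ℝ ι)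
    (ha : ∀ j, 0 < a j) (hq : ∀ j, 0 < q j) :
    renyiDiv ρ a q ≤ ρ / (1 - ρ) * relEntropy r a + relEntropy r q := by
  have hw : ∀ j, 0 < a j ^ ρ * q j ^ (1 - ρ) := fun j =>
    mul_pos (rpow_pos_of_pos (ha j) _) (rpow_pos_of_pos (hq j) _)
  have hρ' : 0 < 1 - ρ := sub_pos.mpr hρ
  calc renyiDiv ρ a q = 1 / (1 - ρ) * -log (∑ j, a j ^ ρ * q j ^ (1 - ρ)) :=
        renyiDiv_eq_neg_log ρ a q
    _ ≤ 1 / (1 - ρ) * relEntropy r (fun j => a j ^ ρ * q j ^ (1 - ρ)) := by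
        gcongr; exact neg_log_sum_le_relEntropy hr hw
    _ = _ := (relEntropy_tilt hρ.ne ha hq).symm

lemma exists_mem_stdSimplex_renyiDiv_eq [Nonempty ι] {ρ : ℝ} (hρ : ρ ≠ 1) {a q : ι → ℝ}
    (ha : ∀ j, 0 < a j) (hq : ∀ j, 0 < q j) :
    ∃ r ∈ stdSimplex ℝ ι, ρ / (1 - ρ) * relEntropy r a + relEntropy r q = renyiDiv ρ a q := by
  set w := fun j => a j ^ ρ * q j ^ (1 - ρ)
  have hw : ∀ j, 0 < w j := fun j =>
    mul_pos (rpow_pos_of_pos (ha j) _) (rpow_pos_of_pos (hq j) _)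
  have hZ : 0 < ∑ j, w j := sum_pos (fun j _ => hw j) univ_nonempty
  refine ⟨fun j => w j / ∑ l, w l, ⟨fun j => (div_pos (hw j) hZ).le, ?_⟩, ?_⟩
  · rw [← sum_div, div_self hZ.ne']
  · rw [relEntropy_tilt hρ ha hq, relEntropy_normalize_self (fun j => (hw j).ne') hZ.ne',
      renyiDiv_eq_neg_log]

end

theorem stmt_12_general {k m : ℕ} (M : Matrix (Fin k) (Fin m) ℝ) (p : Fin k → ℝ)
    (ρ γ : ℝ)
    (hM : ∀ j i, 0 < M j i) (hp : ∀ j, 0 < p j)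
    (hρ : ρ ∈ Set.Ioo (0:ℝ) 1)
    (hγ : ∀ i, ∑ j, M j i = γ)
    (ptilde : Fin k → ℝ) (hpt : ptilde = fun j => p j ^ (1/ρ) / ∑ l, p l ^ (1/ρ))
    (qbar : (Fin m → ℝ) → Fin k → ℝ)
    (hqb : qbar = fun b j => M.mulVec b j / ∑ l, M.mulVec b l)
    (J : (Fin k → ℝ) → (Fin m → ℝ) → ℝ)
    (hJ : J = fun r b => (ρ/(1-ρ)) * (∑ j, r j * Real.log (r j / ptilde j))
        + ∑ j, r j * Real.log (r j / qbar b j))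
    (f : (Fin k → ℝ) → (Fin m → ℝ) → ℝ)
    (hf : f = fun r b => -∑ j, r j * Real.log (M.mulVec b j))
    (bt bt1 : Fin m → ℝ)
    (hbt : (∀ i, 0 ≤ bt i) ∧ ∑ i, bt i = 1)
    (hbt1 : (∀ i, 0 ≤ bt1 i) ∧ ∑ i, bt1 i = 1)
    (rt : Fin k → ℝ) (hrt0 : ∀ j, 0 ≤ rt j) (hrt1 : ∑ j, rt j = 1)
    (hrmin : ∀ r : Fin k → ℝ, (∀ j, 0 ≤ r j) → (∑ j, r j = 1) → J rt bt ≤ J r bt)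
    (hdesc : f rt bt1 ≤ f rt bt) :
    (1/(ρ-1)) * Real.log (∑ j, ptilde j ^ ρ * qbar bt1 j ^ (1-ρ)) ≤
      (1/(ρ-1)) * Real.log (∑ j, ptilde j ^ ρ * qbar bt j ^ (1-ρ)) := by
  subst hJ hf
  have hrt : rt ∈ stdSimplex ℝ (Fin k) := ⟨hrt0, hrt1⟩
  have := nonempty_of_mem_stdSimplex hrt
  have hpt_pos : ∀ j, 0 < ptilde j := by
    rw [hpt]
    exact div_sum_pos fun j => rpow_pos_of_pos (hp j) _
  have hMb_pos := fun b (hb : b ∈ stdSimplex ℝ (Fin m)) => M.mulVec_pos_of_mem_stdSimplex hM hb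
  have hq_pos : ∀ b ∈ stdSimplex ℝ (Fin m), ∀ j, 0 < qbar b j := fun b hb => by
    rw [hqb]
    exact div_sum_pos (hMb_pos b hb)
  have hqbar : ∀ b ∈ stdSimplex ℝ (Fin m), relEntropy rt (qbar b)
      = ∑ j, rt j * log (rt j) - ∑ j, rt j * log ((M *ᵥ b) j) + log γ := fun b hb => by
    have hMb_ne := fun j => (hMb_pos b hb j).ne'
    rw [hqb, relEntropy_div_const hrt1 hMb_ne (sum_pos (fun j _ => hMb_pos b hb j) univ_nonempty).ne',
      relEntropy_eq_sub hMb_ne, M.sum_mulVec_of_sum_col_eq hγ, hb.2, mul_one]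
  obtain ⟨rstar, hrstar, hJstar⟩ :=
    exists_mem_stdSimplex_renyiDiv_eq hρ.2.ne hpt_pos (hq_pos bt hbt)
  calc renyiDiv ρ ptilde (qbar bt1)
      ≤ ρ / (1 - ρ) * relEntropy rt ptilde + relEntropy rt (qbar bt1) :=
        renyiDiv_le hρ.2 hrt hpt_pos (hq_pos bt1 hbt1)
    _ ≤ ρ / (1 - ρ) * relEntropy rt ptilde + relEntropy rt (qbar bt) := by
        rw [hqbar bt1 hbt1, hqbar bt hbt]
        linarith
    _ ≤ ρ / (1 - ρ) * relEntropy rstar ptilde + relEntropy rstar (qbar bt) :=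
        hrmin rstar hrstar.1 hrstar.2
    _ = renyiDiv ρ ptilde (qbar bt) := hJstar

theorem stmt_12 {k m : ℕ} (M : Matrix (Fin k) (Fin m) ℝ) (p : Fin k → ℝ)
    (ρ γ : ℝ)
    (hM : ∀ j i, 0 < M j i) (hp : ∀ j, 0 < p j) (hp1 : ∑ j, p j = 1)
    (hρ : ρ ∈ Set.Ioo (0:ℝ) 1)
    (hγ : ∀ i, ∑ j, M j i = γ)
    (ptilde : Fin k → ℝ) (hpt : ptilde = fun j => p j ^ (1/ρ) / ∑ l, p l ^ (1/ρ))
    (qbar : (Fin m → ℝ) → Fin k → ℝ)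
    (hqb : qbar = fun b j => M.mulVec b j / ∑ l, M.mulVec b l)
    (J : (Fin k → ℝ) → (Fin m → ℝ) → ℝ)
    (hJ : J = fun r b => (ρ/(1-ρ)) * (∑ j, r j * Real.log (r j / ptilde j))
        + ∑ j, r j * Real.log (r j / qbar b j))
    (f : (Fin k → ℝ) → (Fin m → ℝ) → ℝ)
    (hf : f = fun r b => -∑ j, r j * Real.log (M.mulVec b j))
    (bt bt1 : Fin m → ℝ)
    (hbt : (∀ i, 0 ≤ bt i) ∧ ∑ i, bt i = 1)
    (hbt1 : (∀ i, 0 ≤ bt1 i) ∧ ∑ i, bt1 i = 1)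
    (rt : Fin k → ℝ) (hrt0 : ∀ j, 0 ≤ rt j) (hrt1 : ∑ j, rt j = 1)
    (hrmin : ∀ r : Fin k → ℝ, (∀ j, 0 ≤ r j) → (∑ j, r j = 1) → J rt bt ≤ J r bt)
    (hdesc : f rt bt1 ≤ f rt bt) :
    (1/(ρ-1)) * Real.log (∑ j, ptilde j ^ ρ * qbar bt1 j ^ (1-ρ)) ≤
      (1/(ρ-1)) * Real.log (∑ j, ptilde j ^ ρ * qbar bt j ^ (1-ρ)) :=
  stmt_12_general M p ρ γ hM hp hρ hγ ptilde hpt qbar hqb J hJ f hf bt bt1 hbt hbt1 rt hrt0 hrt1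
    hrmin hdesc
end

section
/- Let M ∈ ℝ₊^{k×m}, q* ∈ ℝ^k with positive entries, r* a probability vector on [k], and P ∈ ℝ^{m×(m−1)} a matrix whose columns are an orthonormal basis of {v ∈ ℝ^m : 𝟙^T v = 0}. Suppose M^T (r*/q*) = 𝟙. Define H = P^T M^T diag(r*_j/(q*_j)^2) M P and C = P^T M^T D_q S_r D_q M P, where D_q = diag(1/q*_j) and S_r = diag(r*) − r* (r*)^T. Then C = H. -/
/-!
Conjugating `S_r = diag r* - r* r*ᵀ` by `D_q` splits it as `diag(r*_j / q*_j²) - u uᵀ` with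
`u = r*/q*`. Sandwiched between `(M P)ᵀ` and `M P`, the rank-one part becomes `v vᵀ` with
`v = (M P)ᵀ u = Pᵀ (Mᵀ u) = Pᵀ 𝟙 = 0`.
-/

open Matrix

namespace Matrix

variable {m n α : Type*} [CommSemiring α]

theorem diagonal_mul_vecMulVec_mul_diagonal [Fintype m] [Fintype n] [DecidableEq m]
    [DecidableEq n] (a : m → α) (x : m → α) (y : n → α) (b : n → α) :
    diagonal a * vecMulVec x y * diagonal b = vecMulVec (a * x) (y * b) := by
  ext i j
  simp only [mul_diagonal, diagonal_mul, vecMulVec_apply, Pi.mul_apply]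
  ring

theorem transpose_mul_vecMulVec_self_mul [Fintype m] (A : Matrix m n α) (x : m → α) :
    Aᵀ * vecMulVec x x * A = vecMulVec (x ᵥ* A) (x ᵥ* A) := by
  rw [mul_vecMulVec, vecMulVec_mul, mulVec_transpose]

end Matrix

theorem stmt_15_general {k m : ℕ} (M : Matrix (Fin k) (Fin m) ℝ)
    (qstar : Fin k → ℝ)
    (rstar : Fin k → ℝ)
    (P : Matrix (Fin m) (Fin (m-1)) ℝ)
    (hP1 : Pᵀ.mulVec (fun _ => (1:ℝ)) = 0)
    (hKKT : Mᵀ.mulVec (fun j => rstar j / qstar j) = fun _ => 1) :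
    Pᵀ * Mᵀ * (Matrix.diagonal fun j => 1 / qstar j) *
        (Matrix.diagonal rstar - Matrix.vecMulVec rstar rstar) *
        (Matrix.diagonal fun j => 1 / qstar j) * M * P =
      Pᵀ * Mᵀ * (Matrix.diagonal fun j => rstar j / (qstar j) ^ 2) * M * P := by
  set u : Fin k → ℝ := fun j => rstar j / qstar j
  set D : Matrix (Fin k) (Fin k) ℝ := Matrix.diagonal fun j => 1 / qstar j
  have hDSD : D * (diagonal rstar - vecMulVec rstar rstar) * D =
      (diagonal fun j => rstar j / qstar j ^ 2) - vecMulVec u u := by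
    rw [Matrix.mul_sub, Matrix.sub_mul, diagonal_mul_diagonal, diagonal_mul_diagonal,
      diagonal_mul_vecMulVec_mul_diagonal]
    congr 2 <;> ext j <;> simp only [Pi.mul_apply, u, one_div] <;> ring
  have hu : u ᵥ* (M * P) = 0 := by
    rw [← vecMul_vecMul, ← mulVec_transpose M, hKKT, ← mulVec_transpose P, hP1]
  calc _ = (M * P)ᵀ * (D * (diagonal rstar - vecMulVec rstar rstar) * D) * (M * P) := by
        simp only [transpose_mul, Matrix.mul_assoc]
    _ = (M * P)ᵀ * (diagonal fun j => rstar j / qstar j ^ 2) * (M * P) -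
          (M * P)ᵀ * vecMulVec u u * (M * P) := by
        rw [hDSD, Matrix.mul_sub, Matrix.sub_mul]
    _ = _ := by
        rw [transpose_mul_vecMulVec_self_mul, hu, zero_vecMulVec, sub_zero]
        simp only [transpose_mul, Matrix.mul_assoc]

theorem stmt_15 {k m : ℕ} (M : Matrix (Fin k) (Fin m) ℝ)
    (qstar : Fin k → ℝ) (hq : ∀ j, 0 < qstar j)
    (rstar : Fin k → ℝ) (hr0 : ∀ j, 0 ≤ rstar j) (hr1 : ∑ j, rstar j = 1)
    (P : Matrix (Fin m) (Fin (m-1)) ℝ)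
    (hPP : Pᵀ * P = 1)
    (hP1 : Pᵀ.mulVec (fun _ => (1:ℝ)) = 0)
    (hKKT : Mᵀ.mulVec (fun j => rstar j / qstar j) = fun _ => 1) :
    Pᵀ * Mᵀ * (Matrix.diagonal fun j => 1 / qstar j) *
        (Matrix.diagonal rstar - Matrix.vecMulVec rstar rstar) *
        (Matrix.diagonal fun j => 1 / qstar j) * M * P =
      Pᵀ * Mᵀ * (Matrix.diagonal fun j => rstar j / (qstar j) ^ 2) * M * P :=
  stmt_15_general M qstar rstar P hP1 hKKT
end
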